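/- For the maximally saturated triple {VI, VII, VIII} (cell VI: +1 ⊢ E, -1 ⊢ H∨EH; etc., symmetrically for H and EH), the map from consistent sign vectors to conditions is a bijection (one-to-one correspondence between the three consistent activation vectors and the three conditions), whereas for the crossed triple {I, II, III} of Proposition 1 the analogous map from the six consistent sign vectors to conditions is exactly two-to-one. -/
import Mathlib


inductive Cond : Type
  | E | H | EH
deriving DecidableEq

open Cond

/-- satisfaction of the joint message of the maximally saturated triple {VI, VII, VIII}
by condition `a` under the sign vector `s` -/
def satVI (s : Bool × Bool × Bool) (a : Cond) : Prop :=
  (if s.1 then a = E else (a = H ∨ a = EH)) ∧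
  (if s.2.1 then a = H else (a = E ∨ a = EH)) ∧
  (if s.2.2 then a = EH else (a = H ∨ a = E))

/-- satisfaction of the joint message of the crossed triple {I, II, III} -/
def satI (s : Bool × Bool × Bool) (a : Cond) : Prop :=
  (if s.1 then (a = E ∨ a = H) else (a = E ∨ a = EH)) ∧
  (if s.2.1 then (a = E ∨ a = EH) else (a = H ∨ a = EH)) ∧
  (if s.2.2 then (a = E ∨ a = H) else (a = H ∨ a = EH))


instance : Fintype Cond :=
  ⟨{Cond.E, Cond.H, Cond.EH}, by intro a; cases a <;> simp⟩

instance (s : Bool × Bool × Bool) (a : Cond) : Decidable (satVI s a) := by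
  unfold satVI; infer_instance

instance (s : Bool × Bool × Bool) (a : Cond) : Decidable (satI s a) := by
  unfold satI; infer_instance

theorem stmt6 :
    -- the map consistent sign vectors → conditions is well defined for both triples
    (∀ s a b, satVI s a → satVI s b → a = b) ∧
    (∀ s a b, satI s a → satI s b → a = b) ∧
    -- for {VI,VII,VIII} it is a bijection: each condition arises from exactly one
    -- consistent sign vector
    (∀ a : Cond, ∃! s : Bool × Bool × Bool, satVI s a) ∧
    -- for {I,II,III} it is exactly two-to-one: each condition arises from exactly two
    -- consistent sign vectors
    (∀ a : Cond, ∃ s t : Bool × Bool × Bool, s ≠ t ∧ satI s a ∧ satI t a ∧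
      ∀ u : Bool × Bool × Bool, satI u a → u = s ∨ u = t) := by
  refine ⟨by decide, by decide, by simp only [ExistsUnique]; decide, by decide⟩
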